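/- Let g : ℝ → ℝ be defined by g(y) = sin(2y)/(2y) for y ≠ 0 and g(0) = 1. Then for all y, z ∈ ℝ, |g(y) − g(z)| ≤ (4/3)·max{|y|, |z|}·|y − z|. -/

import Mathlib

/-!
Writing `sinc x = ∫₀¹ cos (x t) dt` and using
`cos a - cos b = -2 sin ((a + b) / 2) sin ((a - b) / 2)` with `|sin u| ≤ |u|` gives
`|cos (x t) - cos (y t)| ≤ t² |x² - y²| / 2`, hence `|sinc x - sinc y| ≤ |x² - y²| / 6`.
Since `g y = sinc (2 y)`, this is `|g y - g z| ≤ (2/3) |y + z| |y - z|`.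
-/

open Real intervalIntegral

/-- `g(y) = sin(2y)/(2y)` for `y ≠ 0`, `g(0) = 1`. -/
noncomputable def gfun (y : ℝ) : ℝ := if y = 0 then 1 else Real.sin (2 * y) / (2 * y)

theorem Real.abs_cos_sub_cos_le_abs_sq_sub_sq (a b : ℝ) :
    |cos a - cos b| ≤ |a ^ 2 - b ^ 2| / 2 := by
  calc |cos a - cos b| = 2 * |sin ((a + b) / 2)| * |sin ((a - b) / 2)| := by
        rw [cos_sub_cos, abs_mul, abs_mul]
        norm_num
    _ ≤ 2 * |(a + b) / 2| * |(a - b) / 2| := by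
        gcongr 2 * ?_ * ?_ <;> exact abs_sin_le_abs
    _ = |a ^ 2 - b ^ 2| / 2 := by
        rw [show a ^ 2 - b ^ 2 = (a + b) * (a - b) by ring, abs_mul, abs_div, abs_div]
        norm_num
        ring

theorem Real.sinc_eq_integral_cos (x : ℝ) : sinc x = ∫ t in (0 : ℝ)..1, cos (x * t) := by
  rcases eq_or_ne x 0 with rfl | hx
  · simp
  · rw [integral_comp_mul_left cos hx, integral_cos, sinc_of_ne_zero hx]
    simp [div_eq_inv_mul]

theorem Real.abs_sinc_sub_sinc_le (x y : ℝ) : |sinc x - sinc y| ≤ |x ^ 2 - y ^ 2| / 6 := by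
  have hcos : ∀ w : ℝ, IntervalIntegrable (fun t => cos (w * t)) MeasureTheory.volume 0 1 :=
    fun w => (by fun_prop : Continuous fun t => cos (w * t)).intervalIntegrable 0 1
  have hbound : ∀ t, ‖cos (x * t) - cos (y * t)‖ ≤ t ^ 2 * (|x ^ 2 - y ^ 2| / 2) := fun t => by
    calc ‖cos (x * t) - cos (y * t)‖ ≤ |(x * t) ^ 2 - (y * t) ^ 2| / 2 :=
          abs_cos_sub_cos_le_abs_sq_sub_sq _ _
      _ = t ^ 2 * (|x ^ 2 - y ^ 2| / 2) := by
          rw [show (x * t) ^ 2 - (y * t) ^ 2 = t ^ 2 * (x ^ 2 - y ^ 2) by ring, abs_mul, abs_sq]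
          ring
  rw [sinc_eq_integral_cos, sinc_eq_integral_cos, ← integral_sub (hcos x) (hcos y), ← norm_eq_abs]
  have hmajorant : IntervalIntegrable (fun t : ℝ => t ^ 2 * (|x ^ 2 - y ^ 2| / 2))
      MeasureTheory.volume 0 1 :=
    (by fun_prop : Continuous fun t : ℝ => t ^ 2 * (|x ^ 2 - y ^ 2| / 2)).intervalIntegrable 0 1
  refine (norm_integral_le_of_norm_le zero_le_one (.of_forall fun t _ => hbound t)
    hmajorant).trans_eq ?_
  rw [integral_mul_const, integral_pow]
  ring

theorem gfun_eq_sinc (y : ℝ) : gfun y = sinc (2 * y) := by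
  simp [gfun, sinc_apply]

/-- `|g(y) − g(z)| ≤ (4/3)·max{|y|,|z|}·|y − z|` for all `y, z ∈ ℝ`. -/
theorem stmt11 : ∀ y z : ℝ, |gfun y - gfun z| ≤ 4 / 3 * max |y| |z| * |y - z| := by
  intro y z
  have hsum : |y + z| ≤ 2 * max |y| |z| :=
    (abs_add_le y z).trans (by linarith [le_max_left |y| |z|, le_max_right |y| |z|])
  calc |gfun y - gfun z| ≤ |(2 * y) ^ 2 - (2 * z) ^ 2| / 6 := by
        rw [gfun_eq_sinc, gfun_eq_sinc]
        exact abs_sinc_sub_sinc_le _ _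
    _ = 2 / 3 * |y + z| * |y - z| := by
        rw [show (2 * y) ^ 2 - (2 * z) ^ 2 = 4 * ((y + z) * (y - z)) by ring, abs_mul, abs_mul]
        norm_num
        ring
    _ ≤ 4 / 3 * max |y| |z| * |y - z| := by
        nlinarith [abs_nonneg (y - z)]
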